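/- arXiv:2105.13587 — 3 statements merged into one kernel-verified Lean document; each statement's English description precedes it below -/
import Mathlib

section
/- Let i : X → Y be a pro-open immersion of quasi-compact schemes. If Y is a noetherian scheme, then X is a noetherian scheme. -/
/-!
Affine-locally `i` is a ring map `f : A → B` such that `Spec B → Spec A` is injective and
`A_{f⁻¹q} → B_q` is bijective for every prime `q` of `B`. These two facts make `q ↦ f⁻¹q` an order
embedding of `Spec B`, so an ideal of `B` not contained in `q` meets `f(A ∖ f⁻¹q)`. Applied to
annihilators, this turns the local equality `b = f a / f s` in `B_q` into an honest equation
`f s * b = f a` in `B` with `s ∉ f⁻¹q`. Hence every ideal `J` of `B` is generated by `f(f⁻¹J)`,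
and `B` is noetherian when `A` is.
-/

open AlgebraicGeometry CategoryTheory PrimeSpectrum Localization

section Algebra

variable {A B : Type*} [CommRing A] [CommRing B] (f : A →+* B)

theorem PrimeSpectrum.exists_le_comap_eq_of_bijective_localRingHom (q : PrimeSpectrum B)
    (hq : Function.Bijective (localRingHom (q.comap f).asIdeal q.asIdeal f rfl))
    {p : PrimeSpectrum A} (hp : p ≤ q.comap f) : ∃ q' ≤ q, q'.comap f = p := by
  obtain ⟨P, rfl⟩ :
      p ∈ Set.range (comap (algebraMap A (Localization.AtPrime (q.comap f).asIdeal))) := by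
    rw [localization_comap_range _ (q.comap f).asIdeal.primeCompl]
    exact Set.disjoint_left.mpr fun a ha hap => ha (hp hap)
  obtain ⟨Q, rfl⟩ := (comapEquiv (RingEquiv.ofBijective _ hq)).symm.surjective P
  refine ⟨comap (algebraMap B (Localization.AtPrime q.asIdeal)) Q, ?_, ?_⟩
  · have hQ : comap (algebraMap B (Localization.AtPrime q.asIdeal)) Q ∈ Set.range _ := ⟨Q, rfl⟩
    rw [localization_comap_range _ q.asIdeal.primeCompl] at hQ
    exact fun b hb => not_not.mp fun hbq => Set.disjoint_left.mp hQ hbq hb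
  · change comap f (comap _ Q) = comap _ (comap (localRingHom _ _ f rfl) Q)
    have hcomm : (algebraMap B (Localization.AtPrime q.asIdeal)).comp f =
        (localRingHom _ _ f rfl).comp (algebraMap A (Localization.AtPrime (q.comap f).asIdeal)) :=
      RingHom.ext fun a => (localRingHom_to_map _ _ f rfl a).symm
    exact congr(comap $hcomm Q)

theorem PrimeSpectrum.le_of_comap_le_comap (hinj : Function.Injective (comap f))
    {q q' : PrimeSpectrum B}
    (hq : Function.Bijective (localRingHom (q.comap f).asIdeal q.asIdeal f rfl))
    (hle : q'.comap f ≤ q.comap f) : q' ≤ q := by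
  obtain ⟨q'', hq'', heq⟩ := exists_le_comap_eq_of_bijective_localRingHom f q hq hle
  exact hinj heq ▸ hq''

theorem PrimeSpectrum.exists_map_mem_of_not_le (hinj : Function.Injective (comap f))
    {q : PrimeSpectrum B}
    (hq : Function.Bijective (localRingHom (q.comap f).asIdeal q.asIdeal f rfl))
    {I : Ideal B} (hI : ¬ I ≤ q.asIdeal) : ∃ t ∉ (q.comap f).asIdeal, f t ∈ I := by
  by_contra! hdisj
  obtain ⟨q', hq', hIq', hq'disj⟩ :=
    I.exists_le_prime_disjoint ((q.comap f).asIdeal.primeCompl.map f)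
      (Set.disjoint_left.mpr fun _ hb ⟨t, ht, hft⟩ => hdisj t ht (hft ▸ hb))
  have hle : (⟨q', hq'⟩ : PrimeSpectrum B).comap f ≤ q.comap f := fun a ha =>
    not_not.mp fun hap => Set.disjoint_left.mp hq'disj ha ⟨a, hap, rfl⟩
  exact hI (hIq'.trans (le_of_comap_le_comap f hinj hq hle))

theorem PrimeSpectrum.exists_map_mul_eq_map (hinj : Function.Injective (comap f))
    {q : PrimeSpectrum B}
    (hq : Function.Bijective (localRingHom (q.comap f).asIdeal q.asIdeal f rfl)) (b : B) :
    ∃ s ∉ (q.comap f).asIdeal, ∃ a, f s * b = f a := by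
  obtain ⟨x, hx⟩ := hq.2 (algebraMap B _ b)
  obtain ⟨⟨a, s⟩, rfl⟩ := IsLocalization.mk'_surjective (q.comap f).asIdeal.primeCompl x
  rw [localRingHom_mk' (I := (q.comap f).asIdeal) q.asIdeal f rfl,
    ← IsLocalization.mk'_one (M := q.asIdeal.primeCompl), IsLocalization.mk'_eq_iff_eq,
    IsLocalization.eq_iff_exists q.asIdeal.primeCompl] at hx
  obtain ⟨u, hu⟩ := hx
  simp only [OneMemClass.coe_one, one_mul] at hu
  have hu_mem : (u : B) ∈ (⊥ : Ideal B).colon (Ideal.span {f s * b - f a}) :=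
    Ideal.mem_colon_span_singleton.mpr (Ideal.mem_bot.mpr (by linear_combination -hu))
  obtain ⟨t, ht, htu⟩ := exists_map_mem_of_not_le f hinj hq fun hle => u.2 (hle hu_mem)
  have htu' : f t * (f s * b - f a) = 0 :=
    Ideal.mem_bot.mp (Ideal.mem_colon_span_singleton.mp htu)
  refine ⟨t * s, (q.comap f).isPrime.mul_notMem ht s.2, t * a, ?_⟩
  rw [map_mul, map_mul]
  linear_combination htu'

theorem Ideal.map_comap_eq_self_of_bijective_localRingHom
    (hinj : Function.Injective (PrimeSpectrum.comap f))
    (hloc : ∀ q : PrimeSpectrum B,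
      Function.Bijective (localRingHom (q.comap f).asIdeal q.asIdeal f rfl))
    (J : Ideal B) : (J.comap f).map f = J := by
  refine le_antisymm map_comap_le fun b hb => ?_
  set I := ((J.comap f).map f).colon (span {b})
  suffices hI : I = ⊤ by
    simpa using mem_colon_span_singleton.mp (hI ▸ Submodule.mem_top : (1 : B) ∈ I)
  by_contra hI
  obtain ⟨m, hm, hIm⟩ := exists_le_maximal I hI
  obtain ⟨s, hs, a, hsa⟩ := exists_map_mul_eq_map f hinj (hloc ⟨m, hm.isPrime⟩) b
  refine hs (hIm (mem_colon_span_singleton.mpr (hsa ▸ mem_map_of_mem f ?_)))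
  rw [mem_comap, ← hsa]
  exact J.mul_mem_left _ hb

theorem isNoetherianRing_of_bijective_localRingHom [IsNoetherianRing A]
    (hinj : Function.Injective (PrimeSpectrum.comap f))
    (hloc : ∀ q : PrimeSpectrum B,
      Function.Bijective (localRingHom (q.comap f).asIdeal q.asIdeal f rfl)) :
    IsNoetherianRing B := by
  refine isNoetherianRing_iff_ideal_fg B |>.mpr fun J => ?_
  rw [← Ideal.map_comap_eq_self_of_bijective_localRingHom f hinj hloc J]
  exact Ideal.FG.map (IsNoetherian.noetherian _) f

end Algebra

namespace AlgebraicGeometry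

structure IsProOpenImmersion {X Y : Scheme} (f : X ⟶ Y) : Prop where
  base_injective : Function.Injective f.base
  isIso_stalkMap : ∀ x, IsIso (f.stalkMap x)

namespace IsProOpenImmersion

variable {X Y Z : Scheme}

theorem of_isOpenImmersion (f : X ⟶ Y) [IsOpenImmersion f] : IsProOpenImmersion f :=
  ⟨f.isOpenEmbedding.injective, fun _ => inferInstance⟩

theorem comp {f : X ⟶ Y} {g : Y ⟶ Z} (hf : IsProOpenImmersion f) (hg : IsProOpenImmersion g) :
    IsProOpenImmersion (f ≫ g) where
  base_injective a b h := hf.base_injective (hg.base_injective (by simpa using h))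
  isIso_stalkMap x := by
    rw [Scheme.Hom.stalkMap_comp]
    exact IsIso.comp_isIso' (hg.isIso_stalkMap _) (hf.isIso_stalkMap x)

theorem of_comp {f : X ⟶ Y} {g : Y ⟶ Z} [∀ y, IsIso (g.stalkMap y)]
    (hfg : IsProOpenImmersion (f ≫ g)) : IsProOpenImmersion f where
  base_injective a b h := hfg.base_injective (by simp [h])
  isIso_stalkMap x := by
    have := hfg.isIso_stalkMap x
    rw [Scheme.Hom.stalkMap_comp] at this
    exact @IsIso.of_isIso_comp_left _ _ _ _ _ (g.stalkMap _) (f.stalkMap x) _ this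

theorem isNoetherianRing_of_Spec_map {R S : CommRingCat} {φ : R ⟶ S}
    (h : IsProOpenImmersion (Spec.map φ)) [IsNoetherianRing R] : IsNoetherianRing S := by
  refine isNoetherianRing_of_bijective_localRingHom φ.hom h.base_injective fun q => ?_
  have : MorphismProperty.isomorphisms _ ((Spec.map φ).stalkMap q) := h.isIso_stalkMap q
  rw [(MorphismProperty.isomorphisms CommRingCat).arrow_mk_iso_iff
    (Scheme.arrowStalkMapSpecIso φ q)] at this
  exact (ConcreteCategory.isIso_iff_bijective _).mp this

theorem isNoetherianRing_of_isAffine {f : X ⟶ Y} [IsAffine X] [IsAffine Y]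
    (hf : IsProOpenImmersion f) [IsNoetherianRing Γ(Y, ⊤)] : IsNoetherianRing Γ(X, ⊤) := by
  refine isNoetherianRing_of_Spec_map (φ := f.appTop) ?_
  have hSpec : Spec.map f.appTop = X.isoSpec.inv ≫ f ≫ Y.isoSpec.hom := by
    rw [← Scheme.isoSpec_hom_naturality, Iso.inv_hom_id_assoc]
  rw [hSpec]
  exact (of_isOpenImmersion _).comp (hf.comp (of_isOpenImmersion _))

theorem isNoetherianRing_of_le_preimage {f : X ⟶ Y} (hf : IsProOpenImmersion f) {U : X.Opens}
    {V : Y.Opens} (hU : IsAffineOpen U) (hV : IsAffineOpen V) (e : U ≤ f ⁻¹ᵁ V)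
    [IsNoetherianRing Γ(Y, V)] : IsNoetherianRing Γ(X, U) := by
  have : IsAffine U := hU
  have : IsAffine V := hV
  have hres : IsProOpenImmersion (f.resLE V U e) := by
    refine of_comp (g := V.ι) ?_
    rw [Scheme.Hom.resLE_comp_ι]
    exact (of_isOpenImmersion U.ι).comp hf
  have : IsNoetherianRing Γ(V, ⊤) :=
    isNoetherianRing_of_ringEquiv _ V.topIso.symm.commRingCatIsoToRingEquiv
  have := isNoetherianRing_of_isAffine hres
  exact isNoetherianRing_of_ringEquiv _ U.topIso.commRingCatIsoToRingEquiv

theorem isLocallyNoetherian {f : X ⟶ Y} (hf : IsProOpenImmersion f) [IsLocallyNoetherian Y] :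
    IsLocallyNoetherian X := by
  have hcover (x : X) :
      ∃ U : X.affineOpens, x ∈ (U : X.Opens) ∧ IsNoetherianRing Γ(X, U) := by
    obtain ⟨V, hV, hxV, -⟩ := TopologicalSpace.Opens.isBasis_iff_nbhd.mp Y.isBasis_affineOpens
      (TopologicalSpace.Opens.mem_top (f x))
    obtain ⟨U, hU, hxU, e⟩ := TopologicalSpace.Opens.isBasis_iff_nbhd.mp X.isBasis_affineOpens
      (show x ∈ f ⁻¹ᵁ V from hxV)
    have := IsLocallyNoetherian.component_noetherian ⟨V, hV⟩
    exact ⟨⟨U, hU⟩, hxU, hf.isNoetherianRing_of_le_preimage hU hV e⟩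
  choose U hxU hU using hcover
  refine isLocallyNoetherian_of_affine_cover (S := U) ?_ hU
  exact top_unique fun x _ => TopologicalSpace.Opens.mem_iSup.mpr ⟨x, hxU x⟩

end IsProOpenImmersion

end AlgebraicGeometry

theorem stmt_1_general {X Y : Scheme} [CompactSpace X]
    (i : X ⟶ Y) (hinj : Function.Injective i.base)
    (hstalk : ∀ x : X, IsIso (i.stalkMap x))
    [AlgebraicGeometry.IsNoetherian Y] :
    AlgebraicGeometry.IsNoetherian X :=
  { toIsLocallyNoetherian := IsProOpenImmersion.isLocallyNoetherian (f := i) ⟨hinj, hstalk⟩ }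

/-- Let `i : X ⟶ Y` be a pro-open immersion of quasi-compact schemes (i.e. `i`
is injective on the underlying topological spaces and induces isomorphisms on all local rings).
If `Y` is a noetherian scheme, then `X` is a noetherian scheme. -/
theorem stmt_1 {X Y : Scheme} [CompactSpace X] [CompactSpace Y]
    (i : X ⟶ Y) (hinj : Function.Injective i.base)
    (hstalk : ∀ x : X, IsIso (i.stalkMap x))
    [AlgebraicGeometry.IsNoetherian Y] :
    AlgebraicGeometry.IsNoetherian X :=
  stmt_1_general i hinj hstalk
end

section
/- Let i : X → 𝒳 be a pro-open immersion of integral noetherian schemes, and assume that 𝒳 is integrally closed in X, meaning that for every affine open subset W ⊆ 𝒳 the ring O_𝒳(W) is integrally closed in the ring O_X(i⁻¹(W)). Then for every point v ∈ 𝒳 that does not lie in the image of i and whose local ring O_{𝒳,v} has Krull dimension 1, the local ring O_{𝒳,v} is a discrete valuation ring. -/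
/-!
A one-dimensional noetherian local domain is a discrete valuation ring as soon as it is
integrally closed, so let `t` in the function field `K` be integral over `O_{𝒳,v}`.
The points where `t` is not regular form a closed set `P`, and since the only primes of
`O_{𝒳,v}` are `0` and the maximal ideal, `v` is the only point of `P` generalizing `v`.
Hence `v` has an affine neighbourhood `W` over which `t` is integral and all of whose points
in `P` are specializations of `v`. As the stalk maps of `i` are isomorphisms, `i` is flat, so
its image is stable under generalization; since it misses `v`, it misses every specialization
of `v`, and `t` is regular along `i(X) ∩ W`. The section of `𝒳` defined by `t` on its domain of
regularity then pulls back to a section of `X` over `i⁻¹ W` that is integral over `O_𝒳(W)`,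
hence comes from some `a ∈ O_𝒳(W)`; comparing germs at a point of `i⁻¹ W` gives `t = a`.
-/

universe u

open AlgebraicGeometry CategoryTheory TopologicalSpace

open IsLocalRing in
theorem IsDiscreteValuationRing.of_ringKrullDim_eq_one {R : Type*} [CommRing R]
    [IsNoetherianRing R] [IsLocalRing R] [IsDomain R] [IsIntegrallyClosed R]
    (h : ringKrullDim R = 1) : IsDiscreteValuationRing R := by
  have hR : ¬ IsField R := fun hR ↦ by simp [ringKrullDim_eq_zero_of_isField hR] at h
  have : Ring.KrullDimLE 1 R := Ring.krullDimLE_iff.mpr h.le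
  refine ((IsDiscreteValuationRing.TFAE R hR).out 0 3).mpr ?_
  refine ⟨‹_›, IsLocalRing.maximalIdeal R,
    ⟨isField_iff_maximalIdeal_eq.not.mp hR, inferInstance⟩, ?_⟩
  rintro P ⟨hP, hPp⟩
  exact eq_maximalIdeal (hPp.isMaximal_of_ne_bot hP)

theorem IsFractionRing.surjective_of_comap_maximalIdeal_eq_bot {R S K : Type*} [CommRing R]
    [Nontrivial R] [CommRing S] [IsLocalRing S] [CommRing K] [Algebra R K] [IsFractionRing R K]
    [Algebra S K] (φ : R →+* S) (hφ : (algebraMap S K).comp φ = algebraMap R K)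
    (hbot : (IsLocalRing.maximalIdeal S).comap φ = ⊥) :
    Function.Surjective (algebraMap S K) := by
  have hunit (y : nonZeroDivisors R) : IsUnit (φ y) := by
    by_contra hy
    have : (y : R) ∈ (IsLocalRing.maximalIdeal S).comap φ := hy
    rw [hbot, Ideal.mem_bot] at this
    exact nonZeroDivisors.ne_zero y.2 this
  have hsection : (algebraMap S K).comp (IsLocalization.lift hunit) = RingHom.id K :=
    IsLocalization.ringHom_ext (nonZeroDivisors R) <| by
      rw [RingHom.comp_assoc, IsLocalization.lift_comp, hφ, RingHom.id_comp]
  exact fun t ↦ ⟨IsLocalization.lift hunit t, RingHom.congr_fun hsection t⟩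

theorem TopologicalSpace.NoetherianSpace.exists_isOpen_inter_subset_closure_singleton
    {α : Type*} [TopologicalSpace α] [NoetherianSpace α] [QuasiSober α] {P : Set α}
    (hP : IsClosed P) {v : α} (hv : ∀ c ∈ P, c ⤳ v → c = v) :
    ∃ V : Set α, IsOpen V ∧ v ∈ V ∧ V ∩ P ⊆ closure {v} := by
  obtain ⟨S, hSfin, hScl, hSirr, rfl⟩ := NoetherianSpace.exists_finite_set_isClosed_irreducible hP
  refine ⟨(⋃₀ {C ∈ S | v ∉ C})ᶜ, ?_, fun ⟨C, hC, hvC⟩ ↦ hC.2 hvC, ?_⟩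
  · rw [Set.sUnion_eq_biUnion, isOpen_compl_iff]
    exact (hSfin.subset fun C hC ↦ hC.1).isClosed_biUnion fun C hC ↦ hScl C hC.1
  rintro w ⟨hwV, C, hCS, hwC⟩
  have hvC : v ∈ C := by_contra fun hvC ↦ hwV ⟨C, ⟨hCS, hvC⟩, hwC⟩
  have hgen := (hSirr C hCS).isGenericPoint_genericPoint (hScl C hCS)
  have hcv : (hSirr C hCS).genericPoint = v :=
    hv _ ⟨C, hCS, hgen.mem⟩ (hgen.specializes hvC)
  rw [← hcv, hgen.def]
  exact hwC

namespace AlgebraicGeometry.Scheme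

variable {Y : Scheme.{u}}

def domainOfDefinition [IrreducibleSpace Y] (t : Y.functionField) : Y.Opens where
  carrier := {y | t ∈ Set.range (algebraMap (Y.presheaf.stalk y) Y.functionField)}
  is_open' := by
    refine isOpen_iff_forall_mem_open.mpr fun y ⟨u, hu⟩ ↦ ?_
    obtain ⟨V, hyV, s, rfl⟩ := Y.presheaf.exists_germ_eq u
    have : Nonempty V := ⟨⟨y, hyV⟩⟩
    refine ⟨V, fun y' hy' ↦ ⟨Y.presheaf.germ V y' hy' s, ?_⟩, V.isOpen, hyV⟩
    rw [algebraMap_germ_eq_germToFunctionField, ← hu, algebraMap_germ_eq_germToFunctionField]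

lemma genericPoint_mem_of_mem [IrreducibleSpace Y] {U : Y.Opens} {y : Y} (hy : y ∈ U) :
    genericPoint Y ∈ U :=
  ((genericPoint_spec Y).mem_open_set_iff U.isOpen).mpr ⟨y, trivial, hy⟩

lemma exists_germToFunctionField_eq [IsIntegral Y] {t : Y.functionField} (U : Y.Opens)
    [Nonempty U] (hU : U ≤ Y.domainOfDefinition t) :
    ∃ s : Γ(Y, U), Y.germToFunctionField U s = t := by
  have hlocal (y : U) : ∃ V ≤ U, ∃ (hyV : (y : Y) ∈ V) (s : Γ(Y, V)),
      Y.presheaf.germ V (genericPoint Y) (genericPoint_mem_of_mem hyV) s = t := by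
    obtain ⟨u, hu⟩ := hU y.2
    obtain ⟨V, hVU, hyV, s, rfl⟩ := Y.presheaf.exists_le_germ_eq u y.2
    have : Nonempty V := ⟨⟨y, hyV⟩⟩
    exact ⟨V, hVU, hyV, s, by rw [← hu, algebraMap_germ_eq_germToFunctionField]⟩
  choose V hVU hyV s hs using hlocal
  obtain ⟨s', hs', -⟩ := Y.sheaf.existsUnique_gluing' V U (fun y ↦ homOfLE (hVU y))
    (fun y hy ↦ Opens.mem_iSup.mpr ⟨⟨y, hy⟩, hyV _⟩) s fun y z ↦ by
      apply germ_injective_of_isIntegral Y (genericPoint Y)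
        (show genericPoint Y ∈ V y ⊓ V z from
          ⟨genericPoint_mem_of_mem (hyV y), genericPoint_mem_of_mem (hyV z)⟩)
      change Y.presheaf.germ _ _ _ (Y.presheaf.map _ (s y)) =
        Y.presheaf.germ _ _ _ (Y.presheaf.map _ (s z))
      rw [TopCat.Presheaf.germ_res_apply, TopCat.Presheaf.germ_res_apply, hs, hs]
  obtain ⟨y⟩ := ‹Nonempty U›
  refine ⟨s', ?_⟩
  rw [← hs y, ← hs' y]
  exact (TopCat.Presheaf.germ_res_apply _ _ _ _ _).symm

open IsLocalRing in
lemma eq_of_specializes_of_comap_maximalIdeal_eq {c v : Y} (h : c ⤳ v)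
    (hm : (maximalIdeal (Y.presheaf.stalk c)).comap (Y.presheaf.stalkSpecializes h).hom =
      maximalIdeal (Y.presheaf.stalk v)) : c = v := by
  have hclosed : (Spec.map (Y.presheaf.stalkSpecializes h)).base (closedPoint _) =
      closedPoint (Y.presheaf.stalk v) := by
    rw [Spec.map_base]
    exact PrimeSpectrum.ext hm
  calc c = Y.fromSpecStalk c (closedPoint _) := fromSpecStalk_closedPoint.symm
    _ = Y.fromSpecStalk v ((Spec.map (Y.presheaf.stalkSpecializes h)) (closedPoint _)) := by
      rw [← SpecMap_stalkSpecializes_fromSpecStalk h]; rfl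
    _ = v := by rw [hclosed, fromSpecStalk_closedPoint]

lemma eq_of_specializes_of_notMem_domainOfDefinition [IsIntegral Y] {v c : Y}
    [Ring.KrullDimLE 1 (Y.presheaf.stalk v)] {t : Y.functionField} (h : c ⤳ v)
    (hc : c ∉ Y.domainOfDefinition t) : c = v := by
  let p := (IsLocalRing.maximalIdeal (Y.presheaf.stalk c)).comap
    (Y.presheaf.stalkSpecializes h).hom
  by_cases hp : p = ⊥
  · refine absurd (IsFractionRing.surjective_of_comap_maximalIdeal_eq_bot
      (K := Y.functionField) (Y.presheaf.stalkSpecializes h).hom ?_ hp t) hc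
    exact RingHom.ext fun z ↦ TopCat.Presheaf.stalkSpecializes_comp_apply Y.presheaf _ h z
  · exact eq_of_specializes_of_comap_maximalIdeal_eq h
      (IsLocalRing.eq_maximalIdeal (Ideal.IsPrime.isMaximal_of_ne_bot inferInstance hp))

lemma range_germ_subset_of_le {v : Y} {U W : Y.Opens} (hWU : W ≤ U) (hvW : v ∈ W) :
    Set.range (Y.presheaf.germ U v (hWU hvW)) ⊆ Set.range (Y.presheaf.germ W v hvW) := by
  rintro _ ⟨s, rfl⟩
  exact ⟨_, Y.presheaf.germ_res_apply (homOfLE hWU) v hvW s⟩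

lemma exists_subset_range_germ (v : Y) (T : Finset (Y.presheaf.stalk v)) :
    ∃ (U : Y.Opens) (hvU : v ∈ U), (T : Set (Y.presheaf.stalk v)) ⊆
      Set.range (Y.presheaf.germ U v hvU) := by
  classical
  induction T using Finset.induction_on with
  | empty => exact ⟨⊤, trivial, by simp⟩
  | insert a T _ ih =>
    obtain ⟨U, hvU, hT⟩ := ih
    obtain ⟨V, hvV, s, rfl⟩ := Y.presheaf.exists_germ_eq a
    have hvUV : v ∈ U ⊓ V := ⟨hvU, hvV⟩
    refine ⟨U ⊓ V, hvUV, ?_⟩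
    rw [Finset.coe_insert, Set.insert_subset_iff]
    exact ⟨range_germ_subset_of_le inf_le_right hvUV ⟨s, rfl⟩,
      hT.trans (range_germ_subset_of_le inf_le_left hvUV)⟩

lemma exists_isIntegralElem_germToFunctionField [IrreducibleSpace Y] {v : Y}
    {t : Y.functionField}
    (ht : (algebraMap (Y.presheaf.stalk v) Y.functionField).IsIntegralElem t) :
    ∃ U : Y.Opens, v ∈ U ∧
      ∀ (W : Y.Opens) [Nonempty W], W ≤ U → (Y.germToFunctionField W).hom.IsIntegralElem t := by
  obtain ⟨p, hpm, hp⟩ := ht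
  obtain ⟨U, hvU, hU⟩ := exists_subset_range_germ v p.coeffs
  obtain ⟨q, rfl, -, hqm⟩ := Polynomial.lifts_and_natDegree_eq_and_monic
    ((Polynomial.lifts_iff_coeffs_subset_range _).mpr hU) hpm
  have : Nonempty U := ⟨⟨v, hvU⟩⟩
  refine ⟨U, hvU, fun W _ hWU ↦ ⟨q.map (Y.presheaf.map (homOfLE hWU).op).hom, hqm.map _, ?_⟩⟩
  rw [Polynomial.eval₂_map] at hp ⊢
  convert hp using 2
  ext s
  simp only [RingHom.coe_comp, Function.comp_apply, algebraMap_germ_eq_germToFunctionField]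
  exact Y.presheaf.germ_res_apply _ _ _ s

end AlgebraicGeometry.Scheme

namespace AlgebraicGeometry.Scheme.Hom

variable {X Y : Scheme.{u}} (f : X ⟶ Y)

lemma generalizingMap_of_isIso_stalkMap (hf : ∀ x, IsIso (f.stalkMap x)) :
    GeneralizingMap f.base := by
  have : Flat f := Flat.of_stalkMap f fun x ↦
    RingHom.Flat.of_bijective (ConcreteCategory.bijective_of_isIso _)
  exact Flat.generalizingMap f

lemma isIntegralElem_app_of_germ_eq [IsIntegral X] {W : Y.Opens} {x : X} (hx : f x ∈ W)
    {b : Γ(X, f ⁻¹ᵁ W)} {u : Y.presheaf.stalk (f x)}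
    (hb : X.presheaf.germ (f ⁻¹ᵁ W) x hx b = f.stalkMap x u)
    (hu : (Y.presheaf.germ W (f x) hx).hom.IsIntegralElem u) :
    (f.app W).hom.IsIntegralElem b := by
  refine .of_map (germ_injective_of_isIntegral X x hx) ?_
  rw [hb, ← CommRingCat.hom_comp, ← germ_stalkMap, CommRingCat.hom_comp]
  exact hu.map _

lemma mem_range_germToFunctionField_of_isIntegralElem [IsIntegral X] [IsIntegral Y]
    {W : Y.Opens} [Nonempty W]
    (hW : ∀ b : Γ(X, f ⁻¹ᵁ W), (f.app W).hom.IsIntegralElem b → b ∈ Set.range (f.app W))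
    {t : Y.functionField} (ht : (Y.germToFunctionField W).hom.IsIntegralElem t)
    (hreg : ∀ x : X, f x ∈ W → f x ∈ Y.domainOfDefinition t)
    {x : X} (hx : f x ∈ W) (hfx : Function.Injective (f.stalkMap x)) :
    t ∈ Set.range (Y.germToFunctionField W) := by
  let D := Y.domainOfDefinition t
  have : Nonempty D := ⟨⟨f x, hreg x hx⟩⟩
  obtain ⟨s, hs⟩ := Y.exists_germToFunctionField_eq D le_rfl
  let b : Γ(X, f ⁻¹ᵁ W) :=
    X.presheaf.map (homOfLE fun x' hx' ↦ hreg x' hx' : f ⁻¹ᵁ W ⟶ f ⁻¹ᵁ D).op (f.app D s)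
  have hb : X.presheaf.germ (f ⁻¹ᵁ W) x hx b =
      f.stalkMap x (Y.presheaf.germ D (f x) (hreg x hx) s) := by
    rw [germ_stalkMap_apply]
    exact X.presheaf.germ_res_apply _ _ _ _
  have hu : algebraMap (Y.presheaf.stalk (f x)) Y.functionField
      (Y.presheaf.germ D (f x) (hreg x hx) s) = t := by
    rw [algebraMap_germ_eq_germToFunctionField, hs]
  have hcomp : (algebraMap (Y.presheaf.stalk (f x)) Y.functionField).comp
      (Y.presheaf.germ W (f x) hx).hom = (Y.germToFunctionField W).hom :=
    RingHom.ext (Y.algebraMap_germ_eq_germToFunctionField hx)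
  obtain ⟨a, ha⟩ := hW b <| f.isIntegralElem_app_of_germ_eq hx hb <|
    .of_map (IsFractionRing.injective _ Y.functionField) (by rwa [hcomp, hu])
  refine ⟨a, ?_⟩
  have hgerm : Y.presheaf.germ W (f x) hx a = Y.presheaf.germ D (f x) (hreg x hx) s :=
    hfx (by rw [germ_stalkMap_apply, ha, hb])
  rw [← Y.algebraMap_germ_eq_germToFunctionField hx, hgerm, hu]

end AlgebraicGeometry.Scheme.Hom

theorem AlgebraicGeometry.isIntegrallyClosed_stalk_of_isIso_stalkMap {X 𝒳 : Scheme.{u}}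
    [IsIntegral X] [IsIntegral 𝒳] [NoetherianSpace 𝒳] (i : X ⟶ 𝒳)
    (hstalk : ∀ x : X, IsIso (i.stalkMap x))
    (hic : ∀ W : 𝒳.Opens, IsAffineOpen W →
      ∀ b : Γ(X, i ⁻¹ᵁ W), RingHom.IsIntegralElem (i.app W).hom b → b ∈ Set.range (i.app W))
    {v : 𝒳} (hv : v ∉ Set.range i.base) [Ring.KrullDimLE 1 (𝒳.presheaf.stalk v)] :
    IsIntegrallyClosed (𝒳.presheaf.stalk v) := by
  rw [isIntegrallyClosed_iff 𝒳.functionField]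
  intro t ht
  have hgen := i.generalizingMap_of_isIso_stalkMap hstalk
  obtain ⟨U, hvU, hU⟩ := 𝒳.exists_isIntegralElem_germToFunctionField ht
  obtain ⟨V, hV, hvV, hVP⟩ := NoetherianSpace.exists_isOpen_inter_subset_closure_singleton
    (𝒳.domainOfDefinition t).isOpen.isClosed_compl
    fun c hc hcv ↦ 𝒳.eq_of_specializes_of_notMem_domainOfDefinition (v := v) hcv hc
  obtain ⟨_, ⟨W, hW, rfl⟩, hvW, hWUV⟩ :=
    𝒳.isBasis_affineOpens.exists_subset_of_mem_open (Set.mem_inter hvU hvV) (U.isOpen.inter hV)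
  have : Nonempty W := ⟨⟨v, hvW⟩⟩
  have hreg (x : X) (hxW : i x ∈ W) : i x ∈ 𝒳.domainOfDefinition t := by
    by_contra hx
    obtain ⟨x', -, rfl⟩ := hgen (specializes_iff_mem_closure.mpr (hVP ⟨(hWUV hxW).2, hx⟩))
    exact hv ⟨x', rfl⟩
  obtain ⟨x, hx⟩ : genericPoint 𝒳 ∈ Set.range i.base :=
    hgen.stableUnderGeneralization_range (genericPoint_specializes _) ⟨genericPoint X, rfl⟩
  obtain ⟨a, ha⟩ := i.mem_range_germToFunctionField_of_isIntegralElem (hic W hW)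
    (hU W fun _ hy ↦ (hWUV hy).1) hreg (hx ▸ 𝒳.genericPoint_mem_of_mem hvW)
    (ConcreteCategory.bijective_of_isIso _).1
  exact ⟨𝒳.presheaf.germ W v hvW a, by rw [𝒳.algebraMap_germ_eq_germToFunctionField, ha]⟩

theorem stmt_3_general {X 𝒳 : Scheme} [AlgebraicGeometry.IsIntegral X] [AlgebraicGeometry.IsIntegral 𝒳]
    [AlgebraicGeometry.IsNoetherian 𝒳]
    (i : X ⟶ 𝒳)
    (hstalk : ∀ x : X, IsIso (i.stalkMap x))
    (hic : ∀ W : 𝒳.Opens, IsAffineOpen W →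
      ∀ b : Γ(X, i ⁻¹ᵁ W), RingHom.IsIntegralElem (i.app W).hom b → b ∈ Set.range (i.app W))
    (v : 𝒳) (hv : v ∉ Set.range i.base)
    (hdim : ringKrullDim (𝒳.presheaf.stalk v) = 1) :
    ∃ _ : IsDomain (𝒳.presheaf.stalk v), IsDiscreteValuationRing (𝒳.presheaf.stalk v) := by
  have : Ring.KrullDimLE 1 (𝒳.presheaf.stalk v) := Ring.krullDimLE_iff.mpr hdim.le
  have := isIntegrallyClosed_stalk_of_isIso_stalkMap i hstalk hic hv
  exact ⟨inferInstance, .of_ringKrullDim_eq_one hdim⟩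

/-- Let `i : X ⟶ 𝒳` be a pro-open immersion of integral noetherian schemes
(injective on points, isomorphisms on local rings), and assume `𝒳` is integrally closed in `X`:
for every affine open `W ⊆ 𝒳`, every element of `O_X(i⁻¹ W)` integral over `O_𝒳(W)` lies in the
image of `O_𝒳(W) → O_X(i⁻¹ W)`.  Then for every point `v ∈ 𝒳` not in the image of `i` whose
local ring has Krull dimension `1`, the local ring `O_{𝒳,v}` is a discrete valuation ring. -/
theorem stmt_3 {X 𝒳 : Scheme} [AlgebraicGeometry.IsIntegral X] [AlgebraicGeometry.IsIntegral 𝒳]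
    [AlgebraicGeometry.IsNoetherian X] [AlgebraicGeometry.IsNoetherian 𝒳]
    (i : X ⟶ 𝒳) (hinj : Function.Injective i.base)
    (hstalk : ∀ x : X, IsIso (i.stalkMap x))
    (hic : ∀ W : 𝒳.Opens, IsAffineOpen W →
      ∀ b : Γ(X, i ⁻¹ᵁ W), RingHom.IsIntegralElem (i.app W).hom b → b ∈ Set.range (i.app W))
    (v : 𝒳) (hv : v ∉ Set.range i.base)
    (hdim : ringKrullDim (𝒳.presheaf.stalk v) = 1) :
    ∃ _ : IsDomain (𝒳.presheaf.stalk v), IsDiscreteValuationRing (𝒳.presheaf.stalk v) :=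
  stmt_3_general i hstalk hic v hv hdim
end

section
/- Let O be a discrete valuation ring with maximal ideal m and normalized additive valuation ord : O∖{0} → ℕ (so ord of a uniformizer is 1). Let e ≥ 0, let R = O[[x₂,…,x_{e+1}]] be the ring of formal power series in e variables over O, and let A = R[[x₁]]. For a ∈ R define v(a) ∈ ℕ ∪ {∞} as the infimum of ord over all coefficients of a (so v(a) = ∞ if and only if a = 0). Fix real numbers 0 < r < 1 and t > 0, and for f = Σ_{n≥0} a_n x₁ⁿ ∈ A define |f|_{t,r} := sup_{n≥0} exp(−t·v(a_n))·rⁿ, with the convention exp(−t·∞) := 0. Then: (i) |·|_{t,r} is a multiplicative non-archimedean norm on A, i.e., |f|_{t,r} = 0 if and only if f = 0, |1|_{t,r} = 1, |fg|_{t,r} = |f|_{t,r}·|g|_{t,r} and |f+g|_{t,r} ≤ max(|f|_{t,r}, |g|_{t,r}) for all f, g ∈ A; (ii) if f ∈ A satisfies v(a_n) = 0 for some n (equivalently, the reduction of f modulo m is nonzero), then for fixed r, lim_{t→∞} |f|_{t,r} = r^{n₀}, where n₀ = min{n : v(a_n) = 0}. -/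
open Filter

/-- For `a` in the multivariable formal power series ring `R = O[[x₂,…,x_{e+1}]]` over `O`,
the infimum `v(a)` of `ord` over all coefficients of `a` (so `v a = ∞` iff `a = 0`). -/
noncomputable def coeffOrd {O : Type*} [CommRing O] (ord : O → ℕ∞) (e : ℕ)
    (a : MvPowerSeries (Fin e) O) : ℕ∞ :=
  ⨅ d : Fin e →₀ ℕ, ord (MvPowerSeries.coeff d a)

/-- `exp (-t·m)` for `m : ℕ∞`, with the convention `exp (-t·∞) = 0`. -/
noncomputable def expNegMul (t : ℝ) (m : ℕ∞) : ℝ :=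
  if m = ⊤ then 0 else Real.exp (-t * (ENat.toNat m : ℝ))

/-- The Gauss norm `|f|_{t,r} = sup_n exp(-t·v(aₙ))·rⁿ` of
`f = Σ aₙ x₁ⁿ ∈ A = R[[x₁]]`, `R = O[[x₂,…,x_{e+1}]]`. -/
noncomputable def gaussNorm {O : Type*} [CommRing O] (ord : O → ℕ∞) (e : ℕ) (t r : ℝ)
    (f : PowerSeries (MvPowerSeries (Fin e) O)) : ℝ :=
  ⨆ n : ℕ, expNegMul t (coeffOrd ord e (PowerSeries.coeff (R := MvPowerSeries (Fin e) O) n f)) * r ^ n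

/-!
A normalized valuation on a DVR is `addVal`. By Gauss's lemma the content valuation
`v(a) = min ord (coefficients of a)` on `R` is additive: dividing out the contents leaves two series
with nonzero reductions modulo `m`, and their product is nonzero because power series over the
residue field form a domain. Hence `a ↦ exp(-t·v(a))` is a nonarchimedean absolute value bounded
by `1`, and `|·|_{t,r}` is its Gauss norm. This norm is multiplicative: if `i` and `j` are the
least indices at which the norms of `f` and `g` are attained, `aᵢ bⱼ` strictly dominates every
other summand of the coefficient of `x₁^(i+j)` in `fg`. As `t → ∞`, every term with `v(aₙ) ≥ 1` is
at most `exp(-t)`, while the terms with `v(aₙ) = 0` are `rⁿ ≤ r^n₀`.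
-/

open Finset IsDiscreteValuationRing

theorem IsDiscreteValuationRing.eq_addVal_of_map_mul_of_map_uniformizer {O : Type*} [CommRing O]
    [IsDomain O] [IsDiscreteValuationRing O] {ord : O → ℕ∞}
    (hord_mul : ∀ a b : O, ord (a * b) = ord a + ord b)
    (hord_unif : ∀ π : O, Irreducible π → ord π = 1) : ord = addVal O := by
  obtain ⟨π, hπ⟩ := exists_irreducible O
  have hone : ord 1 = 0 := by
    have h := hord_mul π 1
    rw [mul_one, hord_unif π hπ] at h
    induction hx : ord 1 using ENat.recTopCoe
    · simp [hx] at h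
    · rw [hx] at h; norm_cast at h ⊢; omega
  have hunit (u : Oˣ) : ord u = 0 := by
    have h := hord_mul u ↑u⁻¹
    rw [Units.mul_inv, hone] at h
    exact (add_eq_zero.mp h.symm).1
  have hpow (n : ℕ) : ord (π ^ n) = n := by
    induction n with
    | zero => simpa using hone
    | succ n ih => rw [pow_succ, hord_mul, ih, hord_unif π hπ]; push_cast; rfl
  funext a
  rcases eq_or_ne a 0 with rfl | ha
  · have h := hord_mul π 0
    rw [mul_zero, hord_unif π hπ] at h
    rw [addVal_zero]
    induction hx : ord 0 using ENat.recTopCoe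
    · rfl
    · rw [hx] at h; norm_cast at h; omega
  · obtain ⟨n, u, rfl⟩ := eq_unit_mul_pow_irreducible ha hπ
    rw [addVal_def' u hπ n, hord_mul, hunit, hpow, zero_add]

section CoeffOrd

open MvPowerSeries

section AddValuation

variable {O : Type*} [CommRing O] {e : ℕ} (v : AddValuation O ℕ∞)

theorem coeffOrd_le (a : MvPowerSeries (Fin e) O) (d : Fin e →₀ ℕ) :
    coeffOrd v e a ≤ v (coeff d a) :=
  iInf_le _ d

theorem min_le_coeffOrd_add (a b : MvPowerSeries (Fin e) O) :
    min (coeffOrd v e a) (coeffOrd v e b) ≤ coeffOrd v e (a + b) :=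
  le_iInf fun d => (min_le_min (coeffOrd_le v a d) (coeffOrd_le v b d)).trans <| by
    rw [map_add]; exact v.map_add _ _

theorem coeffOrd_C_mul (x : O) (a : MvPowerSeries (Fin e) O) :
    coeffOrd v e (C x * a) = v x + coeffOrd v e a := by
  simp only [coeffOrd, coeff_C_mul, v.map_mul, ENat.add_iInf]

end AddValuation

variable {O : Type*} [CommRing O] [IsDomain O] [IsDiscreteValuationRing O] {e : ℕ}

theorem coeffOrd_addVal_eq_top_iff {a : MvPowerSeries (Fin e) O} :
    coeffOrd (addVal O) e a = ⊤ ↔ a = 0 := by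
  simp only [coeffOrd, iInf_eq_top, addVal_eq_top_iff, MvPowerSeries.ext_iff, map_zero]

theorem coeffOrd_addVal_eq_zero_iff {a : MvPowerSeries (Fin e) O} :
    coeffOrd (addVal O) e a = 0 ↔ map (IsLocalRing.residue O) a ≠ 0 := by
  simp only [coeffOrd, ENat.iInf_eq_zero, addVal_eq_zero_iff, ne_eq, MvPowerSeries.ext_iff,
    coeff_map, map_zero, not_forall, IsLocalRing.residue_ne_zero_iff_isUnit]

theorem exists_eq_C_pow_mul_of_le_coeffOrd {π : O} (hπ : Irreducible π) {k : ℕ}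
    {a : MvPowerSeries (Fin e) O} (hk : k ≤ coeffOrd (addVal O) e a) :
    ∃ b, a = C (π ^ k) * b := by
  have hdvd (d : Fin e →₀ ℕ) : π ^ k ∣ coeff d a := by
    rw [← addVal_le_iff_dvd, hπ.addVal_pow]
    exact hk.trans (coeffOrd_le _ a d)
  choose b hb using hdvd
  refine ⟨show MvPowerSeries (Fin e) O from b, ext fun d => ?_⟩
  rw [coeff_C_mul]
  exact hb d

theorem coeffOrd_addVal_mul (a b : MvPowerSeries (Fin e) O) :
    coeffOrd (addVal O) e (a * b) = coeffOrd (addVal O) e a + coeffOrd (addVal O) e b := by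
  rcases eq_or_ne a 0 with rfl | ha
  · simp [coeffOrd_addVal_eq_top_iff.mpr]
  rcases eq_or_ne b 0 with rfl | hb
  · simp [coeffOrd_addVal_eq_top_iff.mpr]
  obtain ⟨π, hπ⟩ := exists_irreducible O
  obtain ⟨k, hk⟩ := ENat.ne_top_iff_exists.mp (mt coeffOrd_addVal_eq_top_iff.mp ha)
  obtain ⟨l, hl⟩ := ENat.ne_top_iff_exists.mp (mt coeffOrd_addVal_eq_top_iff.mp hb)
  obtain ⟨a', rfl⟩ := exists_eq_C_pow_mul_of_le_coeffOrd hπ hk.le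
  obtain ⟨b', rfl⟩ := exists_eq_C_pow_mul_of_le_coeffOrd hπ hl.le
  have map_residue_ne_zero {k : ℕ} {c : MvPowerSeries (Fin e) O}
      (h : coeffOrd (addVal O) e (C (π ^ k) * c) = k) : map (IsLocalRing.residue O) c ≠ 0 := by
    rw [coeffOrd_C_mul, hπ.addVal_pow] at h
    exact coeffOrd_addVal_eq_zero_iff.mp
      (WithTop.add_left_cancel (ENat.natCast_ne_top k) (h.trans (add_zero _).symm))
  have hab' : coeffOrd (addVal O) e (a' * b') = 0 :=
    coeffOrd_addVal_eq_zero_iff.mpr <| by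
      rw [map_mul]
      exact mul_ne_zero (map_residue_ne_zero hk.symm) (map_residue_ne_zero hl.symm)
  rw [← hk, ← hl, mul_mul_mul_comm, ← map_mul, ← pow_add, coeffOrd_C_mul, hπ.addVal_pow, hab',
    add_zero, Nat.cast_add]

end CoeffOrd

section ExpNegMul

variable (t : ℝ)

@[simp] theorem expNegMul_top : expNegMul t ⊤ = 0 := if_pos rfl

@[simp] theorem expNegMul_natCast (n : ℕ) : expNegMul t n = Real.exp (-t) ^ n := by
  simp [expNegMul, ← Real.exp_nat_mul, mul_comm]

@[simp] theorem expNegMul_zero : expNegMul t 0 = 1 := by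
  simpa using expNegMul_natCast t 0

@[simp] theorem expNegMul_one : expNegMul t 1 = Real.exp (-t) := by
  simpa using expNegMul_natCast t 1

theorem expNegMul_eq_zero_iff {m : ℕ∞} : expNegMul t m = 0 ↔ m = ⊤ := by
  induction m using ENat.recTopCoe <;> simp [(Real.exp_pos _).ne']

theorem expNegMul_nonneg (m : ℕ∞) : 0 ≤ expNegMul t m := by
  induction m using ENat.recTopCoe <;> simp [(Real.exp_pos _).le]

theorem expNegMul_add (m n : ℕ∞) : expNegMul t (m + n) = expNegMul t m * expNegMul t n := by
  induction m using ENat.recTopCoe <;> induction n using ENat.recTopCoe <;>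
    simp [← Nat.cast_add, pow_add]

variable {t} (ht : 0 ≤ t)
include ht

theorem expNegMul_antitone : Antitone (expNegMul t) := by
  intro m n hmn
  induction n using ENat.recTopCoe with
  | top => simpa using expNegMul_nonneg t m
  | coe n =>
    lift m to ℕ using ne_top_of_le_ne_top (ENat.natCast_ne_top n) hmn
    simp only [expNegMul_natCast]
    exact pow_le_pow_of_le_one (Real.exp_pos _).le (Real.exp_le_one_iff.mpr (by linarith))
      (by exact_mod_cast hmn)

theorem expNegMul_le_one (m : ℕ∞) : expNegMul t m ≤ 1 := by
  simpa using expNegMul_antitone ht (zero_le (a := m))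

theorem expNegMul_le_exp_neg {m : ℕ∞} (hm : m ≠ 0) : expNegMul t m ≤ Real.exp (-t) := by
  simpa using expNegMul_antitone ht (Order.one_le_iff_ne_zero.mpr hm)

end ExpNegMul

namespace PowerSeries

variable {R : Type*} [Ring R] {c : ℝ}

theorem hasGaussNorm_of_le_one {v : R → ℝ} (hv1 : ∀ a, v a ≤ 1)
    (hc0 : 0 ≤ c) (hc1 : c ≤ 1) (f : R⟦X⟧) : HasGaussNorm v c f :=
  ⟨1, by
    rintro _ ⟨n, rfl⟩
    exact mul_le_one₀ (hv1 _) (pow_nonneg hc0 n) (pow_le_one₀ hc0 hc1)⟩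

variable (v : AbsoluteValue R ℝ)

theorem gaussNorm_one [Nontrivial R] : gaussNorm v c 1 = 1 := by
  have hterm (n : ℕ) : v (coeff n (1 : R⟦X⟧)) * c ^ n = if n = 0 then 1 else 0 := by
    rw [coeff_one]; split_ifs <;> simp_all
  have hle (n : ℕ) : (if n = 0 then (1 : ℝ) else 0) ≤ 1 := by split_ifs <;> norm_num
  rw [gaussNorm_eq]
  simp only [hterm]
  exact le_antisymm (ciSup_le hle) (le_ciSup_of_le ⟨1, Set.forall_mem_range.mpr hle⟩ 0 (by simp))

variable (hv1 : ∀ a, v a ≤ 1) (hc0 : 0 < c) (hc1 : c < 1)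
include hv1 hc0 hc1

theorem gaussNorm_pos {f : R⟦X⟧} (hf : f ≠ 0) : 0 < gaussNorm v c f := by
  refine (gaussNorm_nonneg v c f v.nonneg).lt_of_ne' ?_
  rwa [ne_eq, gaussNorm_eq_zero_iff v c f v.map_zero v.nonneg (fun _ => v.eq_zero.mp) hc0
    (hasGaussNorm_of_le_one hv1 hc0.le hc1.le f)]

/-- The terms `v(aₙ) cⁿ` tend to `0`, so their supremum is attained. -/
theorem exists_apply_coeff_mul_pow_eq_gaussNorm {f : R⟦X⟧} (hf : f ≠ 0) :
    ∃ n, v (coeff n f) * c ^ n = gaussNorm v c f := by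
  obtain ⟨n₀, hn₀⟩ := exists_coeff_ne_zero_iff_ne_zero.mpr hf
  have hpos : 0 < v (coeff n₀ f) * c ^ n₀ := mul_pos (v.pos hn₀) (pow_pos hc0 n₀)
  have hsmall : ∀ᶠ n in cocompact ℕ, v (coeff n f) * c ^ n ≤ v (coeff n₀ f) * c ^ n₀ := by
    rw [cocompact_eq_atTop]
    filter_upwards [(tendsto_pow_atTop_nhds_zero_of_lt_one hc0.le hc1).eventually
      (gt_mem_nhds hpos)] with n hn
    exact (mul_le_of_le_one_left (pow_nonneg hc0.le n) (hv1 _)).trans hn.le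
  obtain ⟨N, hN⟩ := continuous_of_discreteTopology.exists_forall_ge' n₀ hsmall
  exact ⟨N, le_antisymm (le_gaussNorm v c f (hasGaussNorm_of_le_one hv1 hc0.le hc1.le f) N)
    (by rw [gaussNorm_eq]; exact ciSup_le hN)⟩

theorem exists_least_apply_coeff_mul_pow_eq_gaussNorm {f : R⟦X⟧} (hf : f ≠ 0) :
    ∃ n, v (coeff n f) * c ^ n = gaussNorm v c f ∧
      ∀ m < n, v (coeff m f) * c ^ m < gaussNorm v c f := by
  classical
  have hex := exists_apply_coeff_mul_pow_eq_gaussNorm v hv1 hc0 hc1 hf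
  exact ⟨Nat.find hex, Nat.find_spec hex, fun m hm =>
    (le_gaussNorm v c f (hasGaussNorm_of_le_one hv1 hc0.le hc1.le f) m).lt_of_ne
      (Nat.find_min hex hm)⟩

theorem apply_coeff_mul_coeff_lt {f g : R⟦X⟧} (hf : f ≠ 0) (hg : g ≠ 0) {i j : ℕ}
    (hi : v (coeff i f) * c ^ i = gaussNorm v c f)
    (hi_min : ∀ m < i, v (coeff m f) * c ^ m < gaussNorm v c f)
    (hj : v (coeff j g) * c ^ j = gaussNorm v c g)
    (hj_min : ∀ m < j, v (coeff m g) * c ^ m < gaussNorm v c g)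
    {k l : ℕ} (hkl : k + l = i + j) (hne : (k, l) ≠ (i, j)) :
    v (coeff k f * coeff l g) < v (coeff i f * coeff j g) := by
  have hbdd := hasGaussNorm_of_le_one hv1 hc0.le hc1.le
  have hterm_nonneg (n : ℕ) (h : R⟦X⟧) : 0 ≤ v (coeff n h) * c ^ n :=
    mul_nonneg (v.nonneg _) (pow_nonneg hc0.le n)
  have hlt : (v (coeff k f) * c ^ k) * (v (coeff l g) * c ^ l) <
      (v (coeff i f) * c ^ i) * (v (coeff j g) * c ^ j) := by
    rw [hi, hj]
    obtain hk | hl : k < i ∨ l < j := by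
      by_contra! h
      exact hne (Prod.ext (by dsimp; omega) (by dsimp; omega))
    · exact mul_lt_mul_of_nonneg_of_pos (hi_min k hk) (le_gaussNorm v c g (hbdd g) l)
        (hterm_nonneg k f) (gaussNorm_pos v hv1 hc0 hc1 hg)
    · exact mul_lt_mul_of_nonneg_of_pos' (le_gaussNorm v c f (hbdd f) k) (hj_min l hl)
        (hterm_nonneg l g) (gaussNorm_pos v hv1 hc0 hc1 hf)
  refine lt_of_mul_lt_mul_right (a := c ^ (i + j)) ?_ (pow_nonneg hc0.le _)
  calc v (coeff k f * coeff l g) * c ^ (i + j)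
      = (v (coeff k f) * c ^ k) * (v (coeff l g) * c ^ l) := by rw [map_mul, ← hkl]; ring
    _ < (v (coeff i f) * c ^ i) * (v (coeff j g) * c ^ j) := hlt
    _ = v (coeff i f * coeff j g) * c ^ (i + j) := by rw [map_mul]; ring

theorem gaussNorm_mul (hna : IsNonarchimedean v) (f g : R⟦X⟧) :
    gaussNorm v c (f * g) = gaussNorm v c f * gaussNorm v c g := by
  rcases eq_or_ne f 0 with rfl | hf
  · simp
  rcases eq_or_ne g 0 with rfl | hg
  · simp
  have hbdd := hasGaussNorm_of_le_one hv1 hc0.le hc1.le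
  refine le_antisymm (MvPowerSeries.gaussNorm_mul_le v _ f g (fun _ => hc0.le) v.nonneg
    (fun a b => (v.map_mul a b).le) hna v.map_zero (hbdd f).hasMvGaussNorm
    (hbdd g).hasMvGaussNorm) ?_
  obtain ⟨i, hi, hi_min⟩ := exists_least_apply_coeff_mul_pow_eq_gaussNorm v hv1 hc0 hc1 hf
  obtain ⟨j, hj, hj_min⟩ := exists_least_apply_coeff_mul_pow_eq_gaussNorm v hv1 hc0 hc1 hg
  have hdom : ∀ p ∈ antidiagonal (i + j), p ≠ (i, j) →
      v (coeff p.1 f * coeff p.2 g) < v (coeff i f * coeff j g) := fun p hp hne =>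
    apply_coeff_mul_coeff_lt v hv1 hc0 hc1 hf hg hi hi_min hj hj_min
      (HasAntidiagonal.mem_antidiagonal.mp hp) hne
  calc gaussNorm v c f * gaussNorm v c g = v (coeff i f * coeff j g) * c ^ (i + j) := by
        rw [← hi, ← hj, map_mul, pow_add]; ring
    _ = v (coeff (i + j) (f * g)) * c ^ (i + j) := by
        rw [coeff_mul, hna.apply_sum_eq_of_lt (fun a => (v.map_neg a).symm)
          (HasAntidiagonal.mem_antidiagonal.mpr rfl : (i, j) ∈ antidiagonal (i + j)) hdom]
    _ ≤ gaussNorm v c (f * g) := le_gaussNorm v c _ (hbdd _) _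

end PowerSeries

section CoeffAbv

variable {O : Type*} [CommRing O] [IsDomain O] [IsDiscreteValuationRing O] {e : ℕ} {t : ℝ}

theorem isNonarchimedean_expNegMul_coeffOrd (ht : 0 ≤ t) :
    IsNonarchimedean fun a : MvPowerSeries (Fin e) O => expNegMul t (coeffOrd (addVal O) e a) :=
  fun a b => (expNegMul_antitone ht (min_le_coeffOrd_add (addVal O) a b)).trans_eq
    (expNegMul_antitone ht).map_min

noncomputable def coeffAbv (t : ℝ) (ht : 0 ≤ t) : AbsoluteValue (MvPowerSeries (Fin e) O) ℝ where
  toFun a := expNegMul t (coeffOrd (addVal O) e a)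
  map_mul' a b := by simp only [coeffOrd_addVal_mul, expNegMul_add]
  nonneg' _ := expNegMul_nonneg t _
  eq_zero' _ := by rw [expNegMul_eq_zero_iff, coeffOrd_addVal_eq_top_iff]
  add_le' _ _ := (isNonarchimedean_expNegMul_coeffOrd ht).add_le fun _ => expNegMul_nonneg t _

theorem gaussNorm_addVal_eq_gaussNorm_coeffAbv (r : ℝ) (ht : 0 ≤ t)
    (f : PowerSeries (MvPowerSeries (Fin e) O)) :
    gaussNorm (addVal O) e t r f = PowerSeries.gaussNorm (coeffAbv t ht) r f :=
  (PowerSeries.gaussNorm_eq (coeffAbv t ht) r f).symm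

end CoeffAbv

theorem tendsto_gaussNorm_atTop {O : Type*} [CommRing O] {ord : O → ℕ∞} {e : ℕ} {r : ℝ}
    (hr0 : 0 < r) (hr1 : r < 1) (f : PowerSeries (MvPowerSeries (Fin e) O))
    (hf : ∃ n, coeffOrd ord e (PowerSeries.coeff n f) = 0) :
    Tendsto (fun t => gaussNorm ord e t r f) atTop
      (nhds (r ^ sInf {n | coeffOrd ord e (PowerSeries.coeff n f) = 0})) := by
  set n₀ := sInf {n | coeffOrd ord e (PowerSeries.coeff n f) = 0}
  have hn₀ : coeffOrd ord e (PowerSeries.coeff n₀ f) = 0 := Nat.sInf_mem hf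
  have hbdd {t : ℝ} (ht : 0 ≤ t) :=
    PowerSeries.hasGaussNorm_of_le_one (v := fun a => expNegMul t (coeffOrd ord e a))
      (fun _ => expNegMul_le_one ht _) hr0.le hr1.le f
  have hlower : ∀ᶠ t in atTop, r ^ n₀ ≤ gaussNorm ord e t r f := by
    filter_upwards [eventually_ge_atTop 0] with t ht
    simpa only [gaussNorm, hn₀, expNegMul_zero, one_mul] using le_ciSup (hbdd ht) n₀
  have hupper : ∀ᶠ t in atTop, gaussNorm ord e t r f ≤ max (r ^ n₀) (Real.exp (-t)) := by
    filter_upwards [eventually_ge_atTop 0] with t ht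
    refine ciSup_le fun n => ?_
    by_cases hn : coeffOrd ord e (PowerSeries.coeff n f) = 0
    · rw [hn, expNegMul_zero, one_mul]
      exact le_max_of_le_left (pow_le_pow_of_le_one hr0.le hr1.le (Nat.sInf_le hn))
    · exact le_max_of_le_right <| (mul_le_of_le_one_right (expNegMul_nonneg t _)
        (pow_le_one₀ hr0.le hr1.le)).trans (expNegMul_le_exp_neg ht hn)
  have hmax : Tendsto (fun t => max (r ^ n₀) (Real.exp (-t))) atTop (nhds (r ^ n₀)) := by
    have h := (tendsto_const_nhds (x := r ^ n₀)).max
      (Real.tendsto_exp_atBot.comp tendsto_neg_atTop_atBot)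
    rwa [max_eq_left (pow_pos hr0 n₀).le] at h
  exact tendsto_of_tendsto_of_tendsto_of_le_of_le' tendsto_const_nhds hmax hlower hupper

theorem stmt_6_general {O : Type*} [CommRing O] [IsDomain O] [IsDiscreteValuationRing O]
    (ord : O → ℕ∞)
    (hord_mul : ∀ a b : O, ord (a * b) = ord a + ord b)
    (hord_unif : ∀ π : O, Irreducible π → ord π = 1)
    (e : ℕ) (r t : ℝ) (hr0 : 0 < r) (hr1 : r < 1) (ht : 0 < t) :
    ((∀ f : PowerSeries (MvPowerSeries (Fin e) O), gaussNorm ord e t r f = 0 ↔ f = 0) ∧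
      gaussNorm ord e t r 1 = 1 ∧
      (∀ f g : PowerSeries (MvPowerSeries (Fin e) O),
        gaussNorm ord e t r (f * g) = gaussNorm ord e t r f * gaussNorm ord e t r g) ∧
      (∀ f g : PowerSeries (MvPowerSeries (Fin e) O),
        gaussNorm ord e t r (f + g) ≤ max (gaussNorm ord e t r f) (gaussNorm ord e t r g))) ∧
    (∀ f : PowerSeries (MvPowerSeries (Fin e) O),
      (∃ n : ℕ, coeffOrd ord e (PowerSeries.coeff (R := MvPowerSeries (Fin e) O) n f) = 0) →
        Tendsto (fun t' : ℝ => gaussNorm ord e t' r f) atTop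
          (nhds (r ^ sInf {n : ℕ |
            coeffOrd ord e (PowerSeries.coeff (R := MvPowerSeries (Fin e) O) n f) = 0}))) := by
  refine ⟨?_, fun f hf => tendsto_gaussNorm_atTop hr0 hr1 f hf⟩
  obtain rfl := eq_addVal_of_map_mul_of_map_uniformizer hord_mul hord_unif
  set v : AbsoluteValue (MvPowerSeries (Fin e) O) ℝ := coeffAbv t ht.le
  have hv1 : ∀ a, v a ≤ 1 := fun _ => expNegMul_le_one ht.le _
  have hna := isNonarchimedean_expNegMul_coeffOrd (O := O) (e := e) ht.le
  have hbdd := PowerSeries.hasGaussNorm_of_le_one hv1 hr0.le hr1.le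
  simp only [gaussNorm_addVal_eq_gaussNorm_coeffAbv r ht.le]
  exact ⟨fun f => PowerSeries.gaussNorm_eq_zero_iff v r f v.map_zero v.nonneg
      (fun _ => v.eq_zero.mp) hr0 (hbdd f),
    PowerSeries.gaussNorm_one v,
    PowerSeries.gaussNorm_mul v hv1 hr0 hr1 hna,
    fun f g => PowerSeries.gaussNorm_add_le_max v r f g hr0.le v.nonneg hna (hbdd f) (hbdd g)⟩

/-- Let `O` be a discrete valuation ring with normalized additive valuation
`ord` (valued in `ℕ∞`, with `ord a = ∞ ↔ a = 0` and `ord π = 1` for uniformizers `π`).  Let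
`A = R[[x₁]]` with `R = O[[x₂,…,x_{e+1}]]`, let `v : R → ℕ∞` be the infimum of `ord` over
coefficients, and for `0 < r < 1`, `t > 0` let `|f|_{t,r} = sup_n exp(-t·v(aₙ))·rⁿ`.  Then
(i) `|·|_{t,r}` is a multiplicative non-archimedean norm on `A`; and (ii) if some coefficient of
`f` satisfies `v(aₙ) = 0`, then for fixed `r`, as `t → ∞` the norms `|f|_{t,r}` converge to
`r ^ n₀` where `n₀ = min {n : v (aₙ) = 0}`. -/
theorem stmt_6 {O : Type*} [CommRing O] [IsDomain O] [IsDiscreteValuationRing O]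
    (ord : O → ℕ∞)
    (hord_top : ∀ a : O, ord a = ⊤ ↔ a = 0)
    (hord_mul : ∀ a b : O, ord (a * b) = ord a + ord b)
    (hord_add : ∀ a b : O, min (ord a) (ord b) ≤ ord (a + b))
    (hord_unif : ∀ π : O, Irreducible π → ord π = 1)
    (e : ℕ) (r t : ℝ) (hr0 : 0 < r) (hr1 : r < 1) (ht : 0 < t) :
    ((∀ f : PowerSeries (MvPowerSeries (Fin e) O), gaussNorm ord e t r f = 0 ↔ f = 0) ∧
      gaussNorm ord e t r 1 = 1 ∧
      (∀ f g : PowerSeries (MvPowerSeries (Fin e) O),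
        gaussNorm ord e t r (f * g) = gaussNorm ord e t r f * gaussNorm ord e t r g) ∧
      (∀ f g : PowerSeries (MvPowerSeries (Fin e) O),
        gaussNorm ord e t r (f + g) ≤ max (gaussNorm ord e t r f) (gaussNorm ord e t r g))) ∧
    (∀ f : PowerSeries (MvPowerSeries (Fin e) O),
      (∃ n : ℕ, coeffOrd ord e (PowerSeries.coeff (R := MvPowerSeries (Fin e) O) n f) = 0) →
        Tendsto (fun t' : ℝ => gaussNorm ord e t' r f) atTop
          (nhds (r ^ sInf {n : ℕ |
            coeffOrd ord e (PowerSeries.coeff (R := MvPowerSeries (Fin e) O) n f) = 0}))) :=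
  stmt_6_general ord hord_mul hord_unif e r t hr0 hr1 ht
end
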